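/- Let G be a connected cograph such that \bar{G} has k ≥ 2 nontrivial components and t trivial components. Then the geodetic hull number of the complementary prism satisfies h(G\bar{G}) = k + t + 1. -/

import Mathlib

open SimpleGraph

/-- The geodetic closed interval `I[u,v]`: `u`, `v`, and all vertices lying on
some shortest `u`–`v` path. -/
def geoInterval {V : Type*} (G : SimpleGraph V) (u v : V) : Set V :=
  {w | w = u ∨ w = v ∨ (G.Reachable u v ∧ G.dist u w + G.dist w v = G.dist u v)}

/-- A set is geodetically convex if it is closed under intervals. -/
def IsGeoConvex {V : Type*} (G : SimpleGraph V) (S : Set V) : Prop :=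
  ∀ u ∈ S, ∀ v ∈ S, geoInterval G u v ⊆ S

/-- The geodetic convex hull: the smallest convex set containing `S`. -/
def geoHull {V : Type*} (G : SimpleGraph V) (S : Set V) : Set V :=
  ⋂₀ {T | IsGeoConvex G T ∧ S ⊆ T}

/-- `S` is a hull set if its convex hull is the whole vertex set. -/
def IsHullSet {V : Type*} (G : SimpleGraph V) (S : Set V) : Prop :=
  geoHull G S = Set.univ

/-- The geodetic hull number: minimum cardinality of a hull set. -/
noncomputable def hullNumber {V : Type*} (G : SimpleGraph V) : ℕ :=
  sInf {n | ∃ S : Set V, S.ncard = n ∧ IsHullSet G S}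

/-- A vertex is simplicial if its closed neighborhood induces a clique. -/
def IsSimplicial {V : Type*} (G : SimpleGraph V) (v : V) : Prop :=
  ∀ a ∈ G.neighborSet v, ∀ b ∈ G.neighborSet v, a ≠ b → G.Adj a b

/-- The complementary prism `G G̅`: disjoint union of `G` (left copies) and its
complement (right copies), plus a perfect matching between corresponding vertices. -/
def compPrism {V : Type*} (G : SimpleGraph V) : SimpleGraph (V ⊕ V) where
  Adj x y :=
    match x, y with
    | .inl u, .inl w => G.Adj u w
    | .inr u, .inr w => u ≠ w ∧ ¬ G.Adj u w
    | .inl u, .inr w => u = w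
    | .inr u, .inl w => u = w
  symm := by
    constructor
    rintro (u | u) (w | w) h
    · exact h.symm
    · exact h.symm
    · exact h.symm
    · exact ⟨h.1.symm, fun a => h.2 a.symm⟩
  loopless := by
    constructor
    rintro (u | u) h
    · exact (G.ne_of_adj h) rfl
    · exact h.1 rfl

/-- A cograph: a graph with no induced path on four vertices. -/
def IsCograph {V : Type*} (G : SimpleGraph V) : Prop :=
  ∀ a b c d : V,
    ¬ (G.Adj a b ∧ G.Adj b c ∧ G.Adj c d ∧ ¬ G.Adj a c ∧ ¬ G.Adj a d ∧ ¬ G.Adj b d)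

/-! In `G G̅` the vertices of the right copy of a component `C` of `G̅` are reachable from the
rest of the graph only through their left partners, and a geodesic cannot enter and leave that
copy since all distances are at most `3`; so the complement of the copy is convex, and a hull
set meets each of the `k + t` right copies. If it has exactly one vertex in each, those vertices
together with their left partners already form a convex set, which misses the other vertices of
a nontrivial component. Conversely, one right representative of each component together with a
`G̅`-neighbour `v` of the representative `u` of a nontrivial component `C₁` is a hull set:
right vertices from different components are at distance `3` with both left partners on a
geodesic, which puts the left copies of `u` and `v` in the hull; as `G` is the join of the
components of `G̅`, every left vertex outside `C₁` is a midpoint of these two, a second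
nontrivial component handles `C₁`, and the right copy follows along edges of `G̅`. -/

section GeodeticConvexity

variable {V : Type*} {G : SimpleGraph V}

lemma geoInterval_comm (u v : V) : geoInterval G u v = geoInterval G v u := by
  ext w
  change (w = u ∨ w = v ∨ _) ↔ (w = v ∨ w = u ∨ _)
  rw [reachable_comm, G.dist_comm (u := v) (v := u), G.dist_comm (u := v) (v := w),
    G.dist_comm (u := w) (v := u), add_comm]
  tauto

lemma geoInterval_of_adj {u v : V} (h : G.Adj u v) : geoInterval G u v = {u, v} := by
  ext w
  simp only [geoInterval, Set.mem_ofPred_eq, Set.mem_insert_iff, Set.mem_singleton_iff,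
    dist_eq_one_iff_adj.2 h]
  refine ⟨?_, fun h' => h'.elim Or.inl (Or.inr ∘ Or.inl)⟩
  rintro (rfl | rfl | ⟨-, hd⟩)
  · exact Or.inl rfl
  · exact Or.inr rfl
  rcases Nat.add_eq_one_iff.1 hd with ⟨huw, hwv⟩ | ⟨huw, hwv⟩
  · have hwv' := Reachable.of_dist_ne_zero (by omega : G.dist w v ≠ 0)
    exact Or.inl ((h.reachable.trans hwv'.symm).dist_eq_zero_iff.1 huw).symm
  · have huw' := Reachable.of_dist_ne_zero (by omega : G.dist u w ≠ 0)
    exact Or.inr ((huw'.symm.trans h.reachable).dist_eq_zero_iff.1 hwv)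

lemma SimpleGraph.Connected.mem_geoInterval_iff (hG : G.Connected) {u v w : V} :
    w ∈ geoInterval G u v ↔ G.dist u w + G.dist w v = G.dist u v := by
  refine ⟨?_, fun h => Or.inr <| Or.inr ⟨hG u v, h⟩⟩
  rintro (rfl | rfl | ⟨-, h⟩) <;> simp_all

-- Without connectivity, `geoInterval G u u` would also contain every vertex unreachable from
-- `u`, as `dist` takes the junk value `0` on such pairs.
lemma SimpleGraph.Connected.geoInterval_self (hG : G.Connected) (u : V) :
    geoInterval G u u = {u} := by
  ext w
  simp [hG.mem_geoInterval_iff, hG.dist_eq_zero_iff, eq_comm]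

lemma IsGeoConvex.mem_of_dist_add_dist {K : Set V} (hK : IsGeoConvex G K) {u v w : V}
    (hu : u ∈ K) (hv : v ∈ K) (h0 : G.dist u v ≠ 0)
    (h : G.dist u w + G.dist w v = G.dist u v) : w ∈ K :=
  hK u hu v hv (Or.inr <| Or.inr ⟨Reachable.of_dist_ne_zero h0, h⟩)

lemma isGeoConvex_geoHull (S : Set V) : IsGeoConvex G (geoHull G S) :=
  fun _ hu _ hv _ hw _ hT => hT.1 _ (hu _ hT) _ (hv _ hT) hw

lemma isHullSet_iff_forall_isGeoConvex {S : Set V} :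
    IsHullSet G S ↔ ∀ K, IsGeoConvex G K → S ⊆ K → K = Set.univ := by
  refine ⟨fun hS K hK hSK => Set.eq_univ_of_univ_subset ?_,
    fun h => h _ (isGeoConvex_geoHull S) fun _ hx _ hT => hT.2 hx⟩
  exact hS ▸ Set.sInter_subset_of_mem ⟨hK, hSK⟩

lemma hullNumber_eq_of_isLeast {n : ℕ} (hS : ∃ S : Set V, S.ncard = n ∧ IsHullSet G S)
    (hn : ∀ S : Set V, IsHullSet G S → n ≤ S.ncard) : hullNumber G = n :=
  IsLeast.csInf_eq ⟨hS, fun _ ⟨S, hS, hSh⟩ => hS ▸ hn S hSh⟩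

end GeodeticConvexity

namespace SimpleGraph

variable {V : Type*} {G : SimpleGraph V}

lemma dist_eq_two_of_adj_of_adj {u v w : V} (huv : u ≠ v) (hn : ¬G.Adj u v) (huw : G.Adj u w)
    (hwv : G.Adj w v) : G.dist u v = 2 := by
  rw [dist, edist_eq_two_iff.2 ⟨huv, hn, w, (G.mem_commonNeighbors).2 ⟨huw, hwv.symm⟩⟩]
  rfl

lemma exists_adj_adj_of_dist_eq_two {u v : V} (h : G.dist u v = 2) :
    ∃ w, G.Adj u w ∧ G.Adj w v := by
  have hr : G.Reachable u v := Reachable.of_dist_ne_zero (by omega)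
  obtain ⟨-, -, w, hw⟩ := edist_eq_two_iff.1 (by rw [← hr.coe_dist_eq_edist, h]; rfl)
  exact ⟨w, ((G.mem_commonNeighbors).1 hw).1, ((G.mem_commonNeighbors).1 hw).2.symm⟩

lemma ConnectedComponent.exists_adj_of_supp_nontrivial {C : G.ConnectedComponent}
    (hC : C.supp.Nontrivial) {u : V} (hu : u ∈ C.supp) : ∃ v, G.Adj u v := by
  obtain ⟨v, hv, hvu⟩ := hC.exists_ne u
  obtain ⟨p⟩ := C.reachable_of_mem_supp hu hv
  exact ⟨_, p.adj_snd (p.not_nil_of_ne hvu.symm)⟩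

lemma adj_of_connectedComponentMk_compl_ne {u v : V}
    (h : Gᶜ.connectedComponentMk u ≠ Gᶜ.connectedComponentMk v) : G.Adj u v := by
  by_contra hn
  exact h (ConnectedComponent.connectedComponentMk_eq_of_adj
    ((G.compl_adj u v).2 ⟨ne_of_apply_ne _ h, hn⟩))

lemma exists_adj_adj_of_connectedComponentMk_compl_eq [Nontrivial Gᶜ.ConnectedComponent]
    {u v : V} (h : Gᶜ.connectedComponentMk u = Gᶜ.connectedComponentMk v) :
    ∃ w, G.Adj u w ∧ G.Adj w v := by
  obtain ⟨C, hC⟩ := exists_ne (Gᶜ.connectedComponentMk u)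
  induction C using ConnectedComponent.ind with | h w =>
  exact ⟨w, adj_of_connectedComponentMk_compl_ne hC.symm,
    adj_of_connectedComponentMk_compl_ne (h ▸ hC)⟩

lemma connected_of_nontrivial_connectedComponent_compl [Nontrivial Gᶜ.ConnectedComponent] :
    G.Connected :=
  G.connected_or_preconnected_compl.resolve_right fun h =>
    not_subsingleton _ h.subsingleton_connectedComponent

lemma connected_compPrism (hG : G.Connected) : (compPrism G).Connected := by
  have hl (u v : V) : (compPrism G).Reachable (Sum.inl u) (Sum.inl v) :=
    (hG u v).map (⟨Sum.inl, id⟩ : G →g compPrism G)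
  have hlr (u : V) : (compPrism G).Reachable (Sum.inl u) (Sum.inr u) := Adj.reachable rfl
  refine (connected_iff _).2 ⟨?_, ⟨Sum.inl hG.nonempty.some⟩⟩
  rintro (u | u) (v | v)
  · exact hl u v
  · exact (hl u v).trans (hlr v)
  · exact (hlr u).symm.trans (hl u v)
  · exact (hlr u).symm.trans ((hl u v).trans (hlr v))

end SimpleGraph

namespace compPrism

open Sum

variable {V : Type*} {G : SimpleGraph V} {u v : V}

@[simp] lemma adj_inl_inl : (compPrism G).Adj (inl u) (inl v) ↔ G.Adj u v := Iff.rfl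
@[simp] lemma adj_inr_inr : (compPrism G).Adj (inr u) (inr v) ↔ Gᶜ.Adj u v := Iff.rfl
@[simp] lemma adj_inl_inr : (compPrism G).Adj (inl u) (inr v) ↔ u = v := Iff.rfl
@[simp] lemma adj_inr_inl : (compPrism G).Adj (inr u) (inl v) ↔ u = v := Iff.rfl

lemma connected [Nontrivial Gᶜ.ConnectedComponent] : (compPrism G).Connected :=
  connected_compPrism connected_of_nontrivial_connectedComponent_compl

lemma dist_inl_inr_self (u : V) : (compPrism G).dist (inl u) (inr u) = 1 :=
  dist_eq_one_iff_adj.2 rfl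

lemma dist_inl_inr (h : u ≠ v) : (compPrism G).dist (inl u) (inr v) = 2 := by
  have hn : ¬(compPrism G).Adj (inl u) (inr v) := h
  by_cases huv : G.Adj u v
  · exact dist_eq_two_of_adj_of_adj (by simp) hn (w := inl v) huv rfl
  · exact dist_eq_two_of_adj_of_adj (by simp) hn (w := inr u) rfl
      ((G.compl_adj u v).2 ⟨h, huv⟩)

lemma dist_inl_inl_of_compl_adj [Nontrivial Gᶜ.ConnectedComponent] (h : Gᶜ.Adj u v) :
    (compPrism G).dist (inl u) (inl v) = 2 := by
  obtain ⟨w, huw, hwv⟩ := exists_adj_adj_of_connectedComponentMk_compl_eq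
    (ConnectedComponent.connectedComponentMk_eq_of_adj h)
  exact dist_eq_two_of_adj_of_adj (by simpa using h.ne) (by simpa using h.2) (w := inl w) huw hwv

lemma dist_inl_inl_le_two [Nontrivial Gᶜ.ConnectedComponent] (u v : V) :
    (compPrism G).dist (inl u) (inl v) ≤ 2 := by
  rcases eq_or_ne u v with rfl | hne
  · simp
  by_cases h : G.Adj u v
  · simp [dist_eq_one_iff_adj.2 (adj_inl_inl.2 h)]
  · exact (dist_inl_inl_of_compl_adj ((G.compl_adj u v).2 ⟨hne, h⟩)).le

lemma dist_inr_inr_le_three (u v : V) : (compPrism G).dist (inr u) (inr v) ≤ 3 := by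
  by_cases h : G.Adj u v
  · exact dist_le (.cons (adj_inr_inl.2 rfl) (.cons (adj_inl_inl.2 h)
      (.cons (adj_inr_inl.2 rfl).symm .nil)))
  rcases eq_or_ne u v with rfl | hne
  · simp
  · simp [dist_eq_one_iff_adj.2 (adj_inr_inr.2 ((G.compl_adj u v).2 ⟨hne, h⟩))]

lemma dist_inr_inr_of_connectedComponentMk_compl_ne
    (h : Gᶜ.connectedComponentMk u ≠ Gᶜ.connectedComponentMk v) :
    (compPrism G).dist (inr u) (inr v) = 3 := by
  have hne : u ≠ v := ne_of_apply_ne _ h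
  have hna : ¬(compPrism G).Adj (inr u) (inr v) := fun huv =>
    h (ConnectedComponent.connectedComponentMk_eq_of_adj (adj_inr_inr.1 huv))
  have hr : (compPrism G).Reachable (inr u) (inr v) :=
    ⟨.cons (adj_inr_inl.2 rfl) (.cons (adj_inl_inl.2 (adj_of_connectedComponentMk_compl_ne h))
      (.cons (adj_inr_inl.2 rfl).symm .nil))⟩
  have h2 : (compPrism G).dist (inr u) (inr v) ≠ 2 := fun h2 => by
    obtain ⟨w | w, huw, hwv⟩ := exists_adj_adj_of_dist_eq_two h2
    · exact hne ((adj_inr_inl.1 huw).trans (adj_inr_inl.1 hwv.symm).symm)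
    · exact h ((ConnectedComponent.connectedComponentMk_eq_of_adj (adj_inr_inr.1 huw)).trans
        (ConnectedComponent.connectedComponentMk_eq_of_adj (adj_inr_inr.1 hwv)))
  have := hr.one_lt_dist_of_ne_of_not_adj (by simpa using hne) hna
  have := dist_inr_inr_le_three (G := G) u v
  omega

lemma dist_le_three [Nontrivial Gᶜ.ConnectedComponent] (a b : V ⊕ V) :
    (compPrism G).dist a b ≤ 3 := by
  have hlr (u v : V) : (compPrism G).dist (inl u) (inr v) ≤ 2 := by
    rcases eq_or_ne u v with rfl | hne
    · simp [dist_inl_inr_self]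
    · exact (dist_inl_inr hne).le
  rcases a with u | u <;> rcases b with v | v
  · exact (dist_inl_inl_le_two u v).trans (by norm_num)
  · exact (hlr u v).trans (by norm_num)
  · exact dist_comm.trans_le ((hlr v u).trans (by norm_num))
  · exact dist_inr_inr_le_three u v

lemma geoInterval_inl_inr_subset
    (h : Gᶜ.connectedComponentMk u ≠ Gᶜ.connectedComponentMk v) :
    geoInterval (compPrism G) (inl u) (inr v) ⊆ {inl u, inl v, inr v} := by
  have := nontrivial_of_ne _ _ h
  have hP : (compPrism G).Connected := connected
  intro w hw
  rw [hP.mem_geoInterval_iff, dist_inl_inr (ne_of_apply_ne _ h)] at hw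
  by_cases hwu : w = inl u
  · exact .inl hwu
  by_cases hwv : w = inr v
  · exact .inr (.inr hwv)
  have h1 := hP.pos_dist_of_ne (Ne.symm hwu)
  have h2 := hP.pos_dist_of_ne hwv
  have huw := dist_eq_one_iff_adj.1 (by omega : (compPrism G).dist (inl u) w = 1)
  have hwv' := dist_eq_one_iff_adj.1 (by omega : (compPrism G).dist w (inr v) = 1)
  rcases w with z | z
  · exact .inr (.inl (by rw [adj_inl_inr.1 hwv']))
  · rw [← adj_inl_inr.1 huw] at hwv'
    exact absurd (ConnectedComponent.connectedComponentMk_eq_of_adj (adj_inr_inr.1 hwv')) h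

lemma geoInterval_inr_inr_subset
    (h : Gᶜ.connectedComponentMk u ≠ Gᶜ.connectedComponentMk v) :
    geoInterval (compPrism G) (inr u) (inr v) ⊆ {inr u, inl u, inl v, inr v} := by
  have := nontrivial_of_ne _ _ h
  have hP : (compPrism G).Connected := connected
  intro w hw
  rw [hP.mem_geoInterval_iff, dist_inr_inr_of_connectedComponentMk_compl_ne h] at hw
  simp only [Set.mem_insert_iff, Set.mem_singleton_iff]
  rcases w with z | z
  · by_contra! hz
    have hzu : z ≠ u := fun e => hz.2.1 (e ▸ rfl)
    have hzv : z ≠ v := fun e => hz.2.2.1 (e ▸ rfl)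
    rw [dist_comm, dist_inl_inr hzu, dist_inl_inr hzv] at hw
    omega
  · by_contra! hz
    have h1 := hP.pos_dist_of_ne (Ne.symm hz.1)
    have h2 := hP.pos_dist_of_ne hz.2.2.2
    rcases (by omega : (compPrism G).dist (inr u) (inr z) = 1 ∨
        (compPrism G).dist (inr z) (inr v) = 1) with huz | hzv
    · have hcz := ConnectedComponent.connectedComponentMk_eq_of_adj
        (adj_inr_inr.1 (dist_eq_one_iff_adj.1 huz))
      rw [dist_inr_inr_of_connectedComponentMk_compl_ne (u := z) (by rwa [← hcz])] at hw
      omega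
    · have hcz := ConnectedComponent.connectedComponentMk_eq_of_adj
        (adj_inr_inr.1 (dist_eq_one_iff_adj.1 hzv))
      rw [dist_inr_inr_of_connectedComponentMk_compl_ne (v := z) (by rwa [hcz])] at hw
      omega

lemma isGeoConvex_compl_image_inr_supp [Nontrivial Gᶜ.ConnectedComponent]
    (C : Gᶜ.ConnectedComponent) : IsGeoConvex (compPrism G) (inr '' C.supp)ᶜ := by
  have hP : (compPrism G).Connected := connected
  rintro a ha b hb w hw ⟨x, hx, rfl⟩
  rw [hP.mem_geoInterval_iff] at hw
  have hfar (y : V) (hy : (inr y : V ⊕ V) ∉ inr '' C.supp) :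
      (compPrism G).dist (inr x) (inr y) = 3 :=
    dist_inr_inr_of_connectedComponentMk_compl_ne fun hxy => hy ⟨y, hxy.symm.trans hx, rfl⟩
  have h1 := hP.pos_dist_of_ne fun hax : a = inr x => ha (hax ▸ ⟨x, hx, rfl⟩)
  have h2 := hP.pos_dist_of_ne fun hxb : inr x = b => hb (hxb ▸ ⟨x, hx, rfl⟩)
  have hab := dist_le_three (G := G) a b
  rcases a with p | p
  · rcases b with q | q
    · have := dist_inl_inl_le_two (G := G) p q
      have hpx := adj_inl_inr.1 (dist_eq_one_iff_adj.1
        (by omega : (compPrism G).dist (inl p) (inr x) = 1))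
      have hxq := adj_inr_inl.1 (dist_eq_one_iff_adj.1
        (by omega : (compPrism G).dist (inr x) (inl q) = 1))
      subst hpx hxq
      rw [dist_self] at hw
      omega
    · rw [hfar q hb] at hw
      omega
  · rw [SimpleGraph.dist_comm, hfar p ha] at hw
    omega

lemma isGeoConvex_image_inl_union_image_inr [Nontrivial Gᶜ.ConnectedComponent] {A : Set V}
    (hA : A.InjOn Gᶜ.connectedComponentMk) :
    IsGeoConvex (compPrism G) (inl '' A ∪ inr '' A) := by
  set K := inl '' A ∪ inr '' A
  have hl {x} (hx : x ∈ A) : inl x ∈ K := .inl ⟨x, hx, rfl⟩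
  have hr {x} (hx : x ∈ A) : inr x ∈ K := .inr ⟨x, hx, rfl⟩
  have hcomp {x y} (hx : x ∈ A) (hy : y ∈ A) (hxy : x ≠ y) :
      Gᶜ.connectedComponentMk x ≠ Gᶜ.connectedComponentMk y := fun e => hxy (hA hx hy e)
  have hself (a : V ⊕ V) (ha : a ∈ K) : geoInterval (compPrism G) a a ⊆ K := by
    simpa [(connected (G := G)).geoInterval_self] using ha
  have hinl {x} (hx : x ∈ A) (b : V ⊕ V) (hb : b ∈ K) :
      geoInterval (compPrism G) (inl x) b ⊆ K := by
    obtain ⟨y, hy, rfl⟩ | ⟨y, hy, rfl⟩ := hb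
    · rcases eq_or_ne x y with rfl | hxy
      · exact hself _ (hl hx)
      rw [geoInterval_of_adj
        (adj_inl_inl.2 (adj_of_connectedComponentMk_compl_ne (hcomp hx hy hxy)))]
      simp [Set.insert_subset_iff, hl hx, hl hy]
    · rcases eq_or_ne x y with rfl | hxy
      · rw [geoInterval_of_adj (adj_inl_inr.2 rfl)]
        simp [Set.insert_subset_iff, hl hx, hr hx]
      · refine (geoInterval_inl_inr_subset (hcomp hx hy hxy)).trans ?_
        simp [Set.insert_subset_iff, hl hx, hl hy, hr hy]
  rintro _ (⟨x, hx, rfl⟩ | ⟨x, hx, rfl⟩) b hb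
  · exact hinl hx b hb
  obtain ⟨y, hy, rfl⟩ | ⟨y, hy, rfl⟩ := hb
  · exact geoInterval_comm (G := compPrism G) _ _ ▸ hinl hy _ (hr hx)
  rcases eq_or_ne x y with rfl | hxy
  · exact hself _ (hr hx)
  refine (geoInterval_inr_inr_subset (hcomp hx hy hxy)).trans ?_
  simp [Set.insert_subset_iff, hl hx, hl hy, hr hx, hr hy]

section HullSteps

variable {K : Set (V ⊕ V)}

lemma inl_mem_of_inr_mem (hK : IsGeoConvex (compPrism G) K)
    (h : Gᶜ.connectedComponentMk u ≠ Gᶜ.connectedComponentMk v) (hu : inr u ∈ K)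
    (hv : inr v ∈ K) : inl u ∈ K := by
  refine hK.mem_of_dist_add_dist hu hv ?_ ?_ <;>
    rw [dist_inr_inr_of_connectedComponentMk_compl_ne h]
  · norm_num
  · rw [SimpleGraph.dist_comm, dist_inl_inr_self, dist_inl_inr (ne_of_apply_ne _ h)]

lemma inl_mem_of_compl_adj [Nontrivial Gᶜ.ConnectedComponent] (hK : IsGeoConvex (compPrism G) K)
    {a b w : V} (hab : Gᶜ.Adj a b) (ha : inl a ∈ K) (hb : inl b ∈ K)
    (hw : Gᶜ.connectedComponentMk w ≠ Gᶜ.connectedComponentMk a) : inl w ∈ K := by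
  have hab' := ConnectedComponent.connectedComponentMk_eq_of_adj hab
  refine hK.mem_of_dist_add_dist ha hb ?_ ?_ <;> rw [dist_inl_inl_of_compl_adj hab]
  · norm_num
  · rw [dist_eq_one_iff_adj.2 (adj_inl_inl.2 (adj_of_connectedComponentMk_compl_ne hw.symm)),
      dist_eq_one_iff_adj.2 (adj_inl_inl.2 (adj_of_connectedComponentMk_compl_ne (hab' ▸ hw)))]

lemma inr_mem_of_compl_adj (hK : IsGeoConvex (compPrism G) K) (huv : Gᶜ.Adj u v)
    (hu : inl u ∈ K) (hv : inr v ∈ K) : inr u ∈ K := by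
  refine hK.mem_of_dist_add_dist hu hv ?_ ?_ <;> rw [dist_inl_inr huv.ne]
  · norm_num
  · rw [dist_inl_inr_self, dist_eq_one_iff_adj.2 (adj_inr_inr.2 huv)]

lemma inr_mem_of_reachable (hK : IsGeoConvex (compPrism G) K) (hl : ∀ w, inl w ∈ K)
    (huv : Gᶜ.Reachable u v) (hu : inr u ∈ K) : inr v ∈ K := by
  obtain ⟨p⟩ := huv
  induction p with
  | nil => exact hu
  | cons h _ ih => exact ih (inr_mem_of_compl_adj hK h.symm (hl _) hu)

end HullSteps

lemma isHullSet_image_inr_insert_range {r : Gᶜ.ConnectedComponent → V}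
    (hr : ∀ C, Gᶜ.connectedComponentMk (r C) = C) {C₁ C₂ : Gᶜ.ConnectedComponent}
    (h12 : C₁ ≠ C₂) (hC₂ : C₂.supp.Nontrivial) (hv : Gᶜ.Adj (r C₁) v) :
    IsHullSet (compPrism G) (inr '' insert v (Set.range r)) := by
  have := nontrivial_of_ne _ _ h12
  refine isHullSet_iff_forall_isGeoConvex.2 fun K hK hSK => ?_
  have hrK (C) : inr (r C) ∈ K := hSK ⟨r C, .inr ⟨C, rfl⟩, rfl⟩
  have hvC : Gᶜ.connectedComponentMk v = C₁ :=
    (ConnectedComponent.connectedComponentMk_eq_of_adj hv).symm.trans (hr C₁)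
  have hu₁ : inl (r C₁) ∈ K := inl_mem_of_inr_mem hK (by rwa [hr, hr]) (hrK C₁) (hrK C₂)
  have hv₁ : inl v ∈ K :=
    inl_mem_of_inr_mem hK (by rwa [hvC, hr]) (hSK ⟨v, .inl rfl, rfl⟩) (hrK C₂)
  have hout (w) (hw : Gᶜ.connectedComponentMk w ≠ C₁) : inl w ∈ K :=
    inl_mem_of_compl_adj hK hv hu₁ hv₁ (by rwa [hr])
  obtain ⟨z, hz⟩ := ConnectedComponent.exists_adj_of_supp_nontrivial hC₂ (hr C₂)
  have hzC : Gᶜ.connectedComponentMk z = C₂ :=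
    (ConnectedComponent.connectedComponentMk_eq_of_adj hz).symm.trans (hr C₂)
  have hl (w) : inl w ∈ K := by
    by_cases hw : Gᶜ.connectedComponentMk w = C₁
    · exact inl_mem_of_compl_adj hK hz (hout _ (by rw [hr]; exact h12.symm))
        (hout _ (by rw [hzC]; exact h12.symm)) (by rwa [hw, hr])
    · exact hout w hw
  refine Set.eq_univ_of_forall ?_
  rintro (w | x)
  · exact hl w
  · exact inr_mem_of_reachable hK hl (ConnectedComponent.exact (hr _)) (hrK _)

lemma exists_inr_mem_of_isHullSet [Nontrivial Gᶜ.ConnectedComponent] {T : Set (V ⊕ V)}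
    (hT : IsHullSet (compPrism G) T) (C : Gᶜ.ConnectedComponent) :
    ∃ x ∈ C.supp, inr x ∈ T := by
  by_contra! h
  have hK := isHullSet_iff_forall_isGeoConvex.1 hT _ (isGeoConvex_compl_image_inr_supp C)
    (by rintro _ hs ⟨x, hx, rfl⟩; exact h x hx hs)
  obtain ⟨x, hx⟩ := C.nonempty_supp
  exact (hK ▸ Set.mem_univ (inr x) : inr x ∈ (inr '' C.supp)ᶜ) ⟨x, hx, rfl⟩

lemma not_isHullSet_of_subset_image_inr [Nontrivial Gᶜ.ConnectedComponent] {A : Set V}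
    (hA : A.InjOn Gᶜ.connectedComponentMk) {C : Gᶜ.ConnectedComponent} (hC : C.supp.Nontrivial)
    {T : Set (V ⊕ V)} (hTA : T ⊆ inr '' A) : ¬IsHullSet (compPrism G) T := by
  intro hT
  have hK := isHullSet_iff_forall_isGeoConvex.1 hT _ (isGeoConvex_image_inl_union_image_inr hA)
    (hTA.trans Set.subset_union_right)
  have hA' (y : V) : y ∈ A := by
    simpa using (hK ▸ Set.mem_univ (inl y) : inl y ∈ inl '' A ∪ inr '' A)
  obtain ⟨x, hx, y, hy, hxy⟩ := hC
  exact hxy (hA (hA' x) (hA' y) (hx.trans hy.symm))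

lemma ncard_add_one_le_of_isHullSet [Finite V] [Nontrivial Gᶜ.ConnectedComponent]
    {C : Gᶜ.ConnectedComponent} (hC : C.supp.Nontrivial) {T : Set (V ⊕ V)}
    (hT : IsHullSet (compPrism G) T) : Nat.card Gᶜ.ConnectedComponent + 1 ≤ T.ncard := by
  have hsurj : Gᶜ.connectedComponentMk '' (inr ⁻¹' T) = Set.univ :=
    Set.eq_univ_of_forall fun D =>
      let ⟨x, hx, hxT⟩ := exists_inr_mem_of_isHullSet hT D
      ⟨x, hxT, hx⟩
  have hAT : inr '' (inr ⁻¹' T) ⊆ T := Set.image_preimage_subset _ _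
  generalize inr ⁻¹' T = A at hsurj hAT
  have hCA : Nat.card Gᶜ.ConnectedComponent ≤ A.ncard := by
    rw [← Set.ncard_univ, ← hsurj]
    exact Set.ncard_image_le
  have hA : (inr '' A : Set (V ⊕ V)).ncard = A.ncard :=
    Set.ncard_image_of_injective A inr_injective
  have hAT' := Set.ncard_le_ncard hAT
  by_contra! hT'
  have hinj : A.InjOn Gᶜ.connectedComponentMk :=
    Set.injOn_of_ncard_image_eq (by rw [hsurj, Set.ncard_univ]; omega)
  have hTA := Set.eq_of_subset_of_ncard_le hAT (by omega)
  exact not_isHullSet_of_subset_image_inr hinj hC hTA.symm.subset hT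

lemma exists_isHullSet_ncard_eq [Finite V] {C₁ C₂ : Gᶜ.ConnectedComponent}
    (h12 : C₁ ≠ C₂) (hC₁ : C₁.supp.Nontrivial) (hC₂ : C₂.supp.Nontrivial) :
    ∃ S : Set (V ⊕ V), S.ncard = Nat.card Gᶜ.ConnectedComponent + 1 ∧
      IsHullSet (compPrism G) S := by
  let r : Gᶜ.ConnectedComponent → V := Quot.out
  have hr (C) : Gᶜ.connectedComponentMk (r C) = C := Quot.out_eq C
  obtain ⟨v, hv⟩ := ConnectedComponent.exists_adj_of_supp_nontrivial hC₁ (hr C₁)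
  refine ⟨_, ?_, isHullSet_image_inr_insert_range hr h12 hC₂ hv⟩
  have hvr : v ∉ Set.range r := by
    rintro ⟨C, rfl⟩
    have hC : C = C₁ := (hr C).symm.trans
      ((ConnectedComponent.connectedComponentMk_eq_of_adj hv).symm.trans (hr C₁))
    exact hv.ne (hC ▸ rfl)
  have hr_inj : Function.Injective r := fun C D h => (hr C).symm.trans (h ▸ hr D)
  rw [Set.ncard_image_of_injective _ inr_injective, Set.ncard_insert_of_notMem hvr,
    Set.ncard_range_of_injective hr_inj]

theorem hullNumber_eq_card_connectedComponent_compl_add_one [Finite V]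
    {C₁ C₂ : Gᶜ.ConnectedComponent} (h12 : C₁ ≠ C₂) (hC₁ : C₁.supp.Nontrivial)
    (hC₂ : C₂.supp.Nontrivial) :
    hullNumber (compPrism G) = Nat.card Gᶜ.ConnectedComponent + 1 :=
  have := nontrivial_of_ne _ _ h12
  hullNumber_eq_of_isLeast (exists_isHullSet_ncard_eq h12 hC₁ hC₂) fun _ hT =>
    ncard_add_one_le_of_isHullSet hC₁ hT

end compPrism

theorem hullNumber_compPrism_cograph_many_nontrivial_general {V : Type*} [Fintype V]
    (G : SimpleGraph V) (k t : ℕ)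
    (hk : k = Nat.card {C : Gᶜ.ConnectedComponent // C.supp.Nontrivial})
    (hk2 : 2 ≤ k)
    (ht : t = Nat.card {C : Gᶜ.ConnectedComponent // ¬ C.supp.Nontrivial}) :
    hullNumber (compPrism G) = k + t + 1 := by
  have hkt : k + t = Nat.card Gᶜ.ConnectedComponent := by
    rw [hk, ht, ← Nat.card_sum]
    classical
    exact Nat.card_congr (Equiv.sumCompl _)
  obtain ⟨⟨C₁, hC₁⟩, ⟨C₂, hC₂⟩, h12⟩ :=
    (Finite.one_lt_card_iff_nontrivial.1 (hk ▸ hk2)).exists_pair_ne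
  rw [hkt, compPrism.hullNumber_eq_card_connectedComponent_compl_add_one
    (fun h => h12 (Subtype.ext h)) hC₁ hC₂]

theorem hullNumber_compPrism_cograph_many_nontrivial {V : Type*} [Fintype V]
    (G : SimpleGraph V) (k t : ℕ) (hconn : G.Connected) (hcog : IsCograph G)
    (hk : k = Nat.card {C : Gᶜ.ConnectedComponent // C.supp.Nontrivial})
    (hk2 : 2 ≤ k)
    (ht : t = Nat.card {C : Gᶜ.ConnectedComponent // ¬ C.supp.Nontrivial}) :
    hullNumber (compPrism G) = k + t + 1 :=
  hullNumber_compPrism_cograph_many_nontrivial_general G k t hk hk2 ht
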